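/- arXiv:1208.5522 — 3 statements merged into one kernel-verified Lean document; each statement's English description precedes it below -/
import Mathlib

section
/- For any metric spaces X and Y (their product carrying the maximum metric): (i) updim(X × Y) ≥ updim X + dpdim Y; (ii) dpdim(X × Y) ≥ dpdim X + dpdim Y; (iii) lpdim(X × Y) ≥ lpdim X + lpdim Y. -/
open Filter MeasureTheory Set
open scoped ENNReal NNReal Topology

namespace ZPaper

variable {X : Type*} [MetricSpace X] {Y : Type*} [MetricSpace Y]

/-- The `δ`-capacity of a set `E`: the supremum of cardinalities of subsets of `E`
whose points are mutually more than `δ` apart. -/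
noncomputable def capacity (δ : ℝ) (E : Set X) : ℝ≥0∞ :=
  ⨆ (F : Finset X) (_ : ↑F ⊆ E ∧ ∀ x ∈ F, ∀ y ∈ F, x ≠ y → δ < dist x y),
    (F.card : ℝ≥0∞)

/-- Lower box (Minkowski) dimension: `liminf_{δ→0} log C_δ(E) / |log δ|`. -/
noncomputable def lbdim (E : Set X) : EReal :=
  Filter.liminf (fun δ : ℝ => (capacity δ E).log / ((|Real.log δ| : ℝ) : EReal)) (𝓝[>] (0:ℝ))

/-- Upper box (Minkowski) dimension: `limsup_{δ→0} log C_δ(E) / |log δ|`. -/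
noncomputable def ubdim (E : Set X) : EReal :=
  Filter.limsup (fun δ : ℝ => (capacity δ E).log / ((|Real.log δ| : ℝ) : EReal)) (𝓝[>] (0:ℝ))

/-- Upper packing dimension: infimum of `sup_n ubdim Eₙ` over countable covers of `E`. -/
noncomputable def updim (E : Set X) : EReal :=
  ⨅ (A : ℕ → Set X) (_ : E ⊆ ⋃ n, A n), ⨆ n, ubdim (A n)

/-- Lower packing dimension: infimum of `sup_n lbdim Eₙ` over countable covers of `E`. -/
noncomputable def lpdim (E : Set X) : EReal :=
  ⨅ (A : ℕ → Set X) (_ : E ⊆ ⋃ n, A n), ⨆ n, lbdim (A n)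

/-- Directed lower packing dimension: infimum of `sup_n lbdim Eₙ` over increasing
sequences with union `E`. -/
noncomputable def dpdim (E : Set X) : EReal :=
  ⨅ (A : ℕ → Set X) (_ : Monotone A ∧ (⋃ n, A n) = E), ⨆ n, lbdim (A n)

/-- A packing: a family of pairs (center, radius) with positive radii such that
`d(x_i, x_j) > r_i` for distinct members. -/
def IsPacking (π : Set (X × ℝ)) : Prop :=
  (∀ p ∈ π, 0 < p.2) ∧ ∀ p ∈ π, ∀ q ∈ π, p ≠ q → p.2 < dist p.1 q.1

/-- A packing of a set `E`: all centers belong to `E`. -/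
def IsPackingOf (π : Set (X × ℝ)) (E : Set X) : Prop :=
  IsPacking π ∧ ∀ p ∈ π, p.1 ∈ E

/-- A uniform packing: all radii equal. -/
def IsUniform (π : Set (X × ℝ)) : Prop := ∀ p ∈ π, ∀ q ∈ π, p.2 = q.2

/-- A scale: a set of positive reals with `0` in its closure. -/
def IsScale (Δ : Set ℝ) : Prop := Δ ⊆ Set.Ioi (0:ℝ) ∧ (0:ℝ) ∈ closure Δ

/-- A `(Δ,δ)`-packing of `E`: a packing of `E` with radii in `Δ ∩ (0, δ]`. -/
def IsScaledPacking (Δ : Set ℝ) (δ : ℝ) (π : Set (X × ℝ)) (E : Set X) : Prop :=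
  IsPackingOf π E ∧ ∀ p ∈ π, p.2 ∈ Δ ∧ p.2 ≤ δ

/-- `g(π) = Σ_i g(r_i)` for a packing `π`. -/
noncomputable def packVal (g : ℝ → ℝ) (π : Set (X × ℝ)) : ℝ≥0∞ :=
  ∑' p : π, ENNReal.ofReal (g p.1.2)

/-- `pack^g_{Δ,δ}(E) = sup{g(π) : π a (Δ,δ)-packing of E}`. -/
noncomputable def packPre (g : ℝ → ℝ) (Δ : Set ℝ) (δ : ℝ) (E : Set X) : ℝ≥0∞ :=
  ⨆ (π : Set (X × ℝ)) (_ : IsScaledPacking Δ δ π E), packVal g π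

/-- `pack^g_{Δ,0}(E) = inf_{δ>0} pack^g_{Δ,δ}(E)`. -/
noncomputable def packPre0 (g : ℝ → ℝ) (Δ : Set ℝ) (E : Set X) : ℝ≥0∞ :=
  ⨅ (δ : ℝ) (_ : 0 < δ), packPre g Δ δ E

/-- Uniform-packing (box) variant of `packPre`. -/
noncomputable def boxPre (g : ℝ → ℝ) (Δ : Set ℝ) (δ : ℝ) (E : Set X) : ℝ≥0∞ :=
  ⨆ (π : Set (X × ℝ)) (_ : IsScaledPacking Δ δ π E ∧ IsUniform π), packVal g π

/-- `boxm^g_{Δ,0}(E) = inf_{δ>0} boxm^g_{Δ,δ}(E)`. -/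
noncomputable def boxPre0 (g : ℝ → ℝ) (Δ : Set ℝ) (E : Set X) : ℝ≥0∞ :=
  ⨅ (δ : ℝ) (_ : 0 < δ), boxPre g Δ δ E

/-- Munroe's Method I construction. -/
noncomputable def methodI (τ : Set X → ℝ≥0∞) (E : Set X) : ℝ≥0∞ :=
  ⨅ (A : ℕ → Set X) (_ : E ⊆ ⋃ n, A n), ∑' n, τ (A n)

/-- The "directed" Method D construction. -/
noncomputable def methodD (τ : Set X → ℝ≥0∞) (E : Set X) : ℝ≥0∞ :=
  ⨅ (A : ℕ → Set X) (_ : Monotone A ∧ (⋃ n, A n) = E), ⨆ n, τ (A n)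

/-- The `Δ`-packing measure `pack^g_Δ` (Method I of `pack^g_{Δ,0}`). -/
noncomputable def packMeasure (g : ℝ → ℝ) (Δ : Set ℝ) : Set X → ℝ≥0∞ :=
  methodI (packPre0 g Δ)

/-- The `Δ`-box measure `boxm^g_Δ` (Method I of `boxm^g_{Δ,0}`). -/
noncomputable def boxMeasure (g : ℝ → ℝ) (Δ : Set ℝ) : Set X → ℝ≥0∞ :=
  methodI (boxPre0 g Δ)

/-- The upper packing pre-measure `upack^g_0 = pack^g_{(0,∞),0}`. -/
noncomputable def upackPre0 (g : ℝ → ℝ) : Set X → ℝ≥0∞ :=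
  packPre0 g (Set.Ioi (0:ℝ))

/-- The upper packing (= packing) measure `upack^g`. -/
noncomputable def upack (g : ℝ → ℝ) : Set X → ℝ≥0∞ :=
  methodI (upackPre0 g)

/-- The lower packing pre-measure `lpack^g_0(E) = inf_Δ pack^g_{Δ,0}(E)`. -/
noncomputable def lpackPre0 (g : ℝ → ℝ) (E : Set X) : ℝ≥0∞ :=
  ⨅ (Δ : Set ℝ) (_ : IsScale Δ), packPre0 g Δ E

/-- The lower packing measure `lpack^g`. -/
noncomputable def lpack (g : ℝ → ℝ) : Set X → ℝ≥0∞ :=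
  methodI (lpackPre0 g)

/-- The directed lower packing set function `dpack^g` (Method D of `lpack^g_0`). -/
noncomputable def dpack (g : ℝ → ℝ) : Set X → ℝ≥0∞ :=
  methodD (lpackPre0 g)

/-- The lower box (Hewitt–Stromberg) pre-measure `lboxm^g_0(E) = liminf_{δ→0} C_δ(E)·g(δ)`. -/
noncomputable def lboxPre0 (g : ℝ → ℝ) (E : Set X) : ℝ≥0∞ :=
  Filter.liminf (fun δ : ℝ => capacity δ E * ENNReal.ofReal (g δ)) (𝓝[>] (0:ℝ))

/-- The upper box pre-measure `uboxm^g_0(E) = limsup_{δ→0} C_δ(E)·g(δ)`. -/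
noncomputable def uboxPre0 (g : ℝ → ℝ) (E : Set X) : ℝ≥0∞ :=
  Filter.limsup (fun δ : ℝ => capacity δ E * ENNReal.ofReal (g δ)) (𝓝[>] (0:ℝ))

/-- The lower box (Hewitt–Stromberg) measure `lboxm^g`. -/
noncomputable def lbox (g : ℝ → ℝ) : Set X → ℝ≥0∞ := methodI (lboxPre0 g)

/-- The upper box measure `uboxm^g`. -/
noncomputable def ubox (g : ℝ → ℝ) : Set X → ℝ≥0∞ := methodI (uboxPre0 g)

/-- The directed lower box set function `dboxm^g` (Method D of `lboxm^g_0`). -/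
noncomputable def dbox (g : ℝ → ℝ) : Set X → ℝ≥0∞ := methodD (lboxPre0 g)

/-- A Hausdorff function: a nondecreasing positive function on `(0,∞)`. -/
def IsHausdorffFunction (g : ℝ → ℝ) : Prop :=
  MonotoneOn g (Set.Ioi (0:ℝ)) ∧ ∀ r : ℝ, 0 < r → 0 < g r

/-- `f ≺ g`: `lim_{r→0⁺} f(r)/g(r) = 0`. -/
def HPrec (f g : ℝ → ℝ) : Prop :=
  Tendsto (fun r => f r / g r) (𝓝[>] (0:ℝ)) (𝓝 0)

/-- The section `E_x = {y : (x,y) ∈ E}` of a set `E ⊆ X × Y`. -/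
def sect (E : Set (X × Y)) (x : X) : Set Y := {y | (x, y) ∈ E}

/-- The integral of a nonnegative function against a set function, via the usual
supremum over Borel simple functions (for a Borel measure this is the Lebesgue integral). -/
noncomputable def sLintegral (τ : Set X → ℝ≥0∞) (f : X → ℝ≥0∞) : ℝ≥0∞ :=
  letI := borel X
  ⨆ (s : SimpleFunc X ℝ≥0∞) (_ : ∀ x, s x ≤ f x), ∑ y ∈ s.range, y * τ (⇑s ⁻¹' {y})

/-- The upper integral `∫* f dτ = inf{∫ φ dτ : φ ≥ f Borel measurable}`. -/
noncomputable def upperIntegral (τ : Set X → ℝ≥0∞) (f : X → ℝ≥0∞) : ℝ≥0∞ :=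
  letI := borel X
  ⨅ (φ : X → ℝ≥0∞) (_ : ∀ x, f x ≤ φ x) (_ : Measurable φ), sLintegral τ φ

/-- `(Q,m)`-homogeneity of a set `A`: `C_r(E) ≤ Q (diam E / r)^m` for all `E ⊆ A`
and all `0 < r ≤ diam E`. -/
def IsHomog (Q m : ℝ) (A : Set X) : Prop :=
  ∀ E : Set X, E ⊆ A → ∀ r : ℝ, 0 < r → ENNReal.ofReal r ≤ EMetric.diam E →
    capacity r E ≤ ENNReal.ofReal Q * (EMetric.diam E / ENNReal.ofReal r) ^ m

/-- The Assouad dimension of a set. -/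
noncomputable def adim (A : Set X) : ℝ≥0∞ :=
  ⨅ (m : ℝ) (_ : 0 < m ∧ ∃ Q : ℝ, 0 ≤ Q ∧ IsHomog Q m A), ENNReal.ofReal m

/-- The countably stable modification of the Assouad dimension. -/
noncomputable def sadim (A : Set X) : ℝ≥0∞ :=
  ⨅ (S : ℕ → Set X) (_ : A ⊆ ⋃ n, S n), ⨆ n, adim (S n)

/-- The upper packing dimension of a Borel measure. -/
noncomputable def updimM {Z : Type*} [MetricSpace Z] [MeasurableSpace Z]
    (μ : Measure Z) : EReal :=
  ⨅ (E : Set Z) (_ : MeasurableSet[borel Z] E ∧ 0 < μ E), updim E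

/-- The lower packing dimension of a Borel measure. -/
noncomputable def lpdimM {Z : Type*} [MetricSpace Z] [MeasurableSpace Z]
    (μ : Measure Z) : EReal :=
  ⨅ (E : Set Z) (_ : MeasurableSet[borel Z] E ∧ 0 < μ E), lpdim E

/-- Euclidean space `ℝ^m`. -/
abbrev Euc (m : ℕ) := EuclideanSpace ℝ (Fin m)

end ZPaper
open Filter MeasureTheory Set ZPaper
open scoped ENNReal NNReal Topology

/-!
If `s < lbdim E_x`, the section `E_x` contains more than `δ^{-s}` points that are
`δ`-separated, for all small `δ`. Above a `δ`-separated set of such points `x` these fibres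
combine into a `δ`-separated subset of `E` for the maximum metric, so `C_δ(E) ≥ C_δ(B) δ^{-s}`
for the set `B` of such `x`, and therefore `lbdim B + s ≤ lbdim E` and `ubdim B + s ≤ ubdim E`.
Sorting the points `x` by the threshold on `δ` gives countably many sets `B`, increasing in both
the threshold and `E`; they cover `X` as soon as `s` lies below the relevant packing dimension
of `Y`, because the sections of a cover of `X × Y` cover `Y`. For `updim` the cover of `X × Y`
is first made increasing by finite unions, which the upper box dimension does not see, so that
`dpdim Y` applies to the sections.
-/

namespace EReal

theorem add_le_of_forall_coe_lt {a b c : EReal} (h : ∀ s : ℝ, (s : EReal) < b → a + s ≤ c) :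
    a + b ≤ c :=
  add_le_of_forall_lt fun _ ha' _ hb' => by
    obtain ⟨s, hb's, hsb⟩ := exists_between_coe_real hb'
    exact (add_le_add ha'.le hb's.le).trans (h s hsb)

theorem iSup_add_le {ι : Sort*} {f : ι → EReal} {b c : EReal} (h : ∀ i, f i + b ≤ c) :
    (⨆ i, f i) + b ≤ c :=
  add_le_of_forall_lt fun _ ha _ hb => by
    obtain ⟨i, hi⟩ := lt_iSup_iff.1 ha
    exact (add_le_add hi.le hb.le).trans (h i)

end EReal

namespace ZPaper

section Sect

variable {X Y : Type*}

theorem sect_mono {E E' : Set (X × Y)} (h : E ⊆ E') (x : X) : sect E x ⊆ sect E' x :=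
  fun _ hy => h hy

theorem sect_iUnion {ι : Sort*} (E : ι → Set (X × Y)) (x : X) :
    sect (⋃ i, E i) x = ⋃ i, sect (E i) x := by
  ext; simp [sect]

theorem sect_univ (x : X) : sect (univ : Set (X × Y)) x = univ := rfl

end Sect

section Capacity

variable {X : Type*} [MetricSpace X] {δ : ℝ}

theorem le_capacity {E : Set X} {F : Finset X} (hFE : ↑F ⊆ E)
    (hF : (F : Set X).Pairwise (δ < dist · ·)) : (F.card : ℝ≥0∞) ≤ capacity δ E :=
  le_iSup₂_of_le F ⟨hFE, fun _ hx _ hy => hF hx hy⟩ le_rfl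

theorem exists_finset_of_lt_capacity {E : Set X} {c : ℝ≥0∞} (h : c < capacity δ E) :
    ∃ F : Finset X, ↑F ⊆ E ∧ (F : Set X).Pairwise (δ < dist · ·) ∧ c < F.card := by
  simp only [capacity, lt_iSup_iff] at h
  obtain ⟨F, ⟨hFE, hF⟩, hc⟩ := h
  exact ⟨F, hFE, fun x hx y hy => hF x hx y hy, hc⟩

theorem capacity_mono {E E' : Set X} (h : E ⊆ E') : capacity δ E ≤ capacity δ E' :=
  iSup₂_le fun _ hF => le_capacity (hF.1.trans h) fun _ hx _ hy => hF.2 _ hx _ hy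

theorem capacity_union_le (E E' : Set X) :
    capacity δ (E ∪ E') ≤ capacity δ E + capacity δ E' := by
  classical
  refine iSup₂_le fun F ⟨hFE, hF⟩ => ?_
  have hsep (G : Finset X) (hG : G ⊆ F) : (G : Set X).Pairwise (δ < dist · ·) :=
    fun x hx y hy => hF x (hG hx) y (hG hy)
  calc (F.card : ℝ≥0∞) = (F.filter (· ∈ E)).card + (F.filter (· ∉ E)).card := by
        exact_mod_cast (F.card_filter_add_card_filter_not _).symm
    _ ≤ capacity δ E + capacity δ E' := by
        gcongr
        · exact le_capacity (fun x hx => (Finset.mem_filter.1 hx).2)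
            (hsep _ (Finset.filter_subset _ _))
        · exact le_capacity
            (fun x hx => (hFE (Finset.mem_filter.1 hx).1).resolve_left (Finset.mem_filter.1 hx).2)
            (hsep _ (Finset.filter_subset _ _))

variable {Y : Type*} [MetricSpace Y]

/-- `δ`-separated fibres over a `δ`-separated base form a `δ`-separated set for the maximum
metric. -/
theorem capacity_mul_le_of_lt_capacity_sect {E : Set (X × Y)} {B : Set X} {c : ℝ≥0∞}
    (h : ∀ x ∈ B, c < capacity δ (sect E x)) : capacity δ B * c ≤ capacity δ E := by
  classical
  rw [capacity, ENNReal.iSup_mul]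
  refine iSup_le fun F => ?_
  rw [ENNReal.iSup_mul]
  refine iSup_le fun ⟨hFB, hF⟩ => ?_
  have hfib : ∀ x ∈ F, ∃ G : Finset Y,
      ↑G ⊆ sect E x ∧ (G : Set Y).Pairwise (δ < dist · ·) ∧ c < G.card :=
    fun x hx => exists_finset_of_lt_capacity (h x (hFB hx))
  choose! G hGE hG hcG using hfib
  let P : Finset (X × Y) := (F.sigma G).map (Equiv.sigmaEquivProd X Y).toEmbedding
  have hP : ∀ p ∈ P, p.1 ∈ F ∧ p.2 ∈ G p.1 := by
    simp [P, Finset.mem_sigma]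
  have hPE : ↑P ⊆ E := fun p hp => hGE p.1 (hP p hp).1 (hP p hp).2
  have hPsep : (P : Set (X × Y)).Pairwise (δ < dist · ·) := by
    rintro ⟨x, y⟩ hp ⟨x', y'⟩ hq hne
    obtain ⟨hx, hy⟩ := hP _ hp
    obtain ⟨hx', hy'⟩ := hP _ hq
    rw [Prod.dist_eq]
    by_cases hxx : x = x'
    · subst hxx
      exact lt_max_of_lt_right (hG x hx hy hy' fun h => hne (Prod.ext rfl h))
    · exact lt_max_of_lt_left (hF x hx x' hx' hxx)
  calc (F.card : ℝ≥0∞) * c = ∑ _x ∈ F, c := by rw [Finset.sum_const, nsmul_eq_mul]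
    _ ≤ ∑ x ∈ F, ((G x).card : ℝ≥0∞) := Finset.sum_le_sum fun x hx => (hcG x hx).le
    _ = P.card := by simp [P, Finset.card_sigma]
    _ ≤ capacity δ E := le_capacity hPE hPsep

end Capacity

section BoxDimension

variable {X : Type*} [MetricSpace X] {Z : Type*} [MetricSpace Z]

noncomputable def logCapacityRatio (E : Set X) (δ : ℝ) : EReal :=
  (capacity δ E).log / ((|Real.log δ| : ℝ) : EReal)

theorem lbdim_eq_liminf (E : Set X) : lbdim E = liminf (logCapacityRatio E) (𝓝[>] 0) := rfl

theorem ubdim_eq_limsup (E : Set X) : ubdim E = limsup (logCapacityRatio E) (𝓝[>] 0) := rfl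

theorem log_ofReal_rpow_neg {δ : ℝ} (hδ0 : 0 < δ) (hδ1 : δ < 1) (s : ℝ) :
    ENNReal.log (ENNReal.ofReal (δ ^ (-s))) = ((s * |Real.log δ| : ℝ) : EReal) := by
  rw [ENNReal.log_ofReal_of_pos (Real.rpow_pos_of_pos hδ0 _), Real.log_rpow hδ0,
    abs_of_neg (Real.log_neg hδ0 hδ1)]
  congr 1
  ring

theorem logCapacityRatio_add_le {B : Set X} {A : Set Z} {s δ : ℝ} (hδ0 : 0 < δ) (hδ1 : δ < 1)
    (h : capacity δ B * ENNReal.ofReal (δ ^ (-s)) ≤ capacity δ A) :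
    logCapacityRatio B δ + s ≤ logCapacityRatio A δ := by
  have hL : 0 < |Real.log δ| := abs_pos.2 (Real.log_neg hδ0 hδ1).ne
  calc logCapacityRatio B δ + s
      = ENNReal.log (capacity δ B * ENNReal.ofReal (δ ^ (-s))) / ((|Real.log δ| : ℝ) : EReal) := by
        rw [ENNReal.log_mul_add, log_ofReal_rpow_neg hδ0 hδ1,
          EReal.add_div_of_nonneg_right (by exact_mod_cast hL.le), ← EReal.coe_div,
          mul_div_cancel_right₀ _ hL.ne']
        rfl
    _ ≤ logCapacityRatio A δ :=
        EReal.div_le_div_right_of_nonneg (by exact_mod_cast hL.le) (ENNReal.log_monotone h)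

theorem lt_capacity_of_lt_logCapacityRatio {E : Set X} {s δ : ℝ} (hδ0 : 0 < δ) (hδ1 : δ < 1)
    (h : (s : EReal) < logCapacityRatio E δ) : ENNReal.ofReal (δ ^ (-s)) < capacity δ E := by
  have hL : 0 < |Real.log δ| := abs_pos.2 (Real.log_neg hδ0 hδ1).ne
  rw [← ENNReal.log_lt_log_iff, log_ofReal_rpow_neg hδ0 hδ1, EReal.coe_mul]
  exact (EReal.lt_div_iff (by exact_mod_cast hL) (EReal.coe_ne_top _)).1 h

theorem eventually_lt_capacity_of_lt_lbdim {E : Set X} {s : ℝ} (h : (s : EReal) < lbdim E) :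
    ∀ᶠ δ in 𝓝[>] 0, ENNReal.ofReal (δ ^ (-s)) < capacity δ E := by
  filter_upwards [eventually_lt_of_lt_liminf h, Ioo_mem_nhdsGT one_pos] with δ hδ hδ01
  exact lt_capacity_of_lt_logCapacityRatio hδ01.1 hδ01.2 hδ

theorem eventually_logCapacityRatio_add_le {B : Set X} {A : Set Z} {s : ℝ}
    (h : ∀ᶠ δ in 𝓝[>] 0, capacity δ B * ENNReal.ofReal (δ ^ (-s)) ≤ capacity δ A) :
    ∀ᶠ δ in 𝓝[>] 0, logCapacityRatio B δ + s ≤ logCapacityRatio A δ := by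
  filter_upwards [h, Ioo_mem_nhdsGT one_pos] with δ hδ hδ01
  exact logCapacityRatio_add_le hδ01.1 hδ01.2 hδ

theorem lbdim_add_le_of_capacity_mul_le {B : Set X} {A : Set Z} {s : ℝ}
    (h : ∀ᶠ δ in 𝓝[>] 0, capacity δ B * ENNReal.ofReal (δ ^ (-s)) ≤ capacity δ A) :
    lbdim B + s ≤ lbdim A :=
  calc lbdim B + s
      = liminf (logCapacityRatio B) (𝓝[>] 0) + liminf (fun _ => (s : EReal)) (𝓝[>] 0) := by
        rw [liminf_const, lbdim_eq_liminf]
    _ ≤ liminf (logCapacityRatio B + fun _ => (s : EReal)) (𝓝[>] 0) := EReal.le_liminf_add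
    _ ≤ lbdim A := liminf_le_liminf (eventually_logCapacityRatio_add_le h)

theorem ubdim_add_le_of_capacity_mul_le {B : Set X} {A : Set Z} {s : ℝ}
    (h : ∀ᶠ δ in 𝓝[>] 0, capacity δ B * ENNReal.ofReal (δ ^ (-s)) ≤ capacity δ A) :
    ubdim B + s ≤ ubdim A :=
  calc ubdim B + s
      = limsup (logCapacityRatio B) (𝓝[>] 0) + liminf (fun _ => (s : EReal)) (𝓝[>] 0) := by
        rw [liminf_const, ubdim_eq_limsup]
    _ ≤ limsup (logCapacityRatio B + fun _ => (s : EReal)) (𝓝[>] 0) := EReal.le_limsup_add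
    _ ≤ ubdim A := limsup_le_limsup (eventually_logCapacityRatio_add_le h)

theorem logCapacityRatio_union_le (E E' : Set X) (δ : ℝ) :
    logCapacityRatio (E ∪ E') δ ≤
      max (logCapacityRatio E δ) (logCapacityRatio E' δ) +
        ((Real.log 2 / |Real.log δ| : ℝ) : EReal) := by
  have hL : (0 : EReal) ≤ ((|Real.log δ| : ℝ) : EReal) := by exact_mod_cast abs_nonneg _
  have hcap : capacity δ (E ∪ E') ≤ 2 * max (capacity δ E) (capacity δ E') :=
    (capacity_union_le E E').trans <| by
      rw [two_mul]; exact add_le_add (le_max_left _ _) (le_max_right _ _)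
  have hlog2 : ENNReal.log 2 = ((Real.log 2 : ℝ) : EReal) := by
    simpa using ENNReal.log_ofReal_of_pos (x := 2) two_pos
  calc logCapacityRatio (E ∪ E') δ
      ≤ ENNReal.log (2 * max (capacity δ E) (capacity δ E')) / ((|Real.log δ| : ℝ) : EReal) :=
        EReal.div_le_div_right_of_nonneg hL (ENNReal.log_monotone hcap)
    _ = _ := by
        rw [ENNReal.log_mul_add, ENNReal.log_monotone.map_max, add_comm,
          EReal.add_div_of_nonneg_right hL, (EReal.monotone_div_right_of_nonneg hL).map_max,
          hlog2, EReal.coe_div]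
        rfl

theorem ubdim_union_le (E E' : Set X) : ubdim (E ∪ E') ≤ max (ubdim E) (ubdim E') := by
  set v : ℝ → EReal := fun δ => ((Real.log 2 / |Real.log δ| : ℝ) : EReal)
  have hv : limsup v (𝓝[>] 0) = 0 := by
    refine Tendsto.limsup_eq ?_
    have := tendsto_const_nhds (x := Real.log 2) |>.div_atTop
      (tendsto_abs_atBot_atTop.comp Real.tendsto_log_nhdsGT_zero)
    exact EReal.coe_zero ▸ (continuous_coe_real_ereal.tendsto 0).comp this
  calc ubdim (E ∪ E')
      ≤ limsup ((fun δ => max (logCapacityRatio E δ) (logCapacityRatio E' δ)) + v) (𝓝[>] 0) :=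
        limsup_le_limsup (.of_forall (logCapacityRatio_union_le E E'))
    _ ≤ limsup (fun δ => max (logCapacityRatio E δ) (logCapacityRatio E' δ)) (𝓝[>] 0) +
          limsup v (𝓝[>] 0) := EReal.limsup_add_le (.inr (by simp [hv])) (.inr (by simp [hv]))
    _ = max (ubdim E) (ubdim E') := by rw [hv, add_zero, limsup_max]; rfl

theorem ubdim_accumulate_le (E : ℕ → Set X) (n : ℕ) :
    ubdim (accumulate E n) ≤ ⨆ k, ubdim (E k) := by
  induction n with
  | zero => simpa using le_iSup (fun k => ubdim (E k)) 0
  | succ n ih =>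
      rw [accumulate_succ]
      exact (ubdim_union_le _ _).trans (max_le ih (le_iSup (fun k => ubdim (E k)) _))

end BoxDimension

section LargeSect

variable {X : Type*} {Y : Type*} [MetricSpace Y]

def largeSect (s : ℝ) (m : ℕ) (E : Set (X × Y)) : Set X :=
  {x | ∀ δ ∈ Ioo 0 (1 / (m + 1 : ℝ)), ENNReal.ofReal (δ ^ (-s)) < capacity δ (sect E x)}

theorem largeSect_mono {s : ℝ} {m m' : ℕ} {E E' : Set (X × Y)} (hm : m ≤ m') (hE : E ⊆ E') :
    largeSect s m E ⊆ largeSect s m' E' := by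
  intro x hx δ hδ
  have hm' : 1 / (m' + 1 : ℝ) ≤ 1 / (m + 1 : ℝ) := by gcongr
  exact (hx δ ⟨hδ.1, hδ.2.trans_le hm'⟩).trans_le (capacity_mono (sect_mono hE x))

theorem exists_mem_largeSect {s : ℝ} {E : Set (X × Y)} {x : X}
    (h : (s : EReal) < lbdim (sect E x)) : ∃ m, x ∈ largeSect s m E := by
  obtain ⟨ε, hε, hsub⟩ :=
    mem_nhdsGT_iff_exists_Ioo_subset.1 (eventually_lt_capacity_of_lt_lbdim h)
  obtain ⟨m, hm⟩ := exists_nat_one_div_lt (mem_Ioi.1 hε)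
  exact ⟨m, fun δ hδ => hsub ⟨hδ.1, hδ.2.trans hm⟩⟩

theorem exists_mem_largeSect_of_lt_iSup {s : ℝ} {A : ℕ → Set (X × Y)} {x : X}
    (h : (s : EReal) < ⨆ n, lbdim (sect (A n) x)) : ∃ n m, x ∈ largeSect s m (A n) := by
  obtain ⟨n, hn⟩ := lt_iSup_iff.1 h
  exact ⟨n, exists_mem_largeSect hn⟩

theorem lpdim_le_iSup_lbdim_sect {E : ℕ → Set (X × Y)} (hE : univ ⊆ ⋃ n, E n) (x : X) :
    lpdim (univ : Set Y) ≤ ⨆ n, lbdim (sect (E n) x) :=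
  iInf₂_le _ (by rw [← sect_iUnion, ← sect_univ x]; exact sect_mono hE x)

theorem dpdim_le_iSup_lbdim_sect {A : ℕ → Set (X × Y)} (hA : Monotone A ∧ ⋃ n, A n = univ)
    (x : X) : dpdim (univ : Set Y) ≤ ⨆ n, lbdim (sect (A n) x) :=
  iInf₂_le _ ⟨fun _ _ h => sect_mono (hA.1 h) x, by rw [← sect_iUnion, hA.2, sect_univ]⟩

variable [MetricSpace X]

theorem capacity_largeSect_mul_le (s : ℝ) (m : ℕ) (E : Set (X × Y)) :
    ∀ᶠ δ in 𝓝[>] 0,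
      capacity δ (largeSect s m E) * ENNReal.ofReal (δ ^ (-s)) ≤ capacity δ E := by
  filter_upwards [Ioo_mem_nhdsGT (by positivity : (0 : ℝ) < 1 / (m + 1))] with δ hδ
  exact capacity_mul_le_of_lt_capacity_sect fun x hx => hx δ hδ

theorem lbdim_largeSect_add_le (s : ℝ) (m : ℕ) (E : Set (X × Y)) :
    lbdim (largeSect s m E) + s ≤ lbdim E :=
  lbdim_add_le_of_capacity_mul_le (capacity_largeSect_mul_le s m E)

theorem ubdim_largeSect_add_le (s : ℝ) (m : ℕ) (E : Set (X × Y)) :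
    ubdim (largeSect s m E) + s ≤ ubdim E :=
  ubdim_add_le_of_capacity_mul_le (capacity_largeSect_mul_le s m E)

end LargeSect

section PackingDimension

variable {X : Type*} [MetricSpace X] {Y : Type*} [MetricSpace Y]

theorem updim_le_of_subset_iUnion_prod {E : Set X} {A : ℕ × ℕ → Set X} (h : E ⊆ ⋃ p, A p) :
    updim E ≤ ⨆ p, ubdim (A p) := by
  rw [← Nat.pairEquiv.symm.iSup_comp]
  exact iInf₂_le _ (by rwa [Nat.pairEquiv.symm.surjective.iUnion_comp])

theorem lpdim_le_of_subset_iUnion_prod {E : Set X} {A : ℕ × ℕ → Set X} (h : E ⊆ ⋃ p, A p) :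
    lpdim E ≤ ⨆ p, lbdim (A p) := by
  rw [← Nat.pairEquiv.symm.iSup_comp]
  exact iInf₂_le _ (by rwa [Nat.pairEquiv.symm.surjective.iUnion_comp])

theorem lpdim_add_lpdim_le_lpdim_prod :
    lpdim (univ : Set X) + lpdim (univ : Set Y) ≤ lpdim (univ : Set (X × Y)) := by
  refine le_iInf₂ fun E hE => EReal.add_le_of_forall_coe_lt fun s hs => ?_
  have hcover : univ ⊆ ⋃ p : ℕ × ℕ, largeSect s p.2 (E p.1) := fun x _ => by
    obtain ⟨n, m, hx⟩ :=
      exists_mem_largeSect_of_lt_iSup (hs.trans_le (lpdim_le_iSup_lbdim_sect hE x))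
    exact mem_iUnion.2 ⟨(n, m), hx⟩
  calc lpdim univ + s ≤ (⨆ p : ℕ × ℕ, lbdim (largeSect s p.2 (E p.1))) + s := by
        gcongr; exact lpdim_le_of_subset_iUnion_prod hcover
    _ ≤ ⨆ n, lbdim (E n) := EReal.iSup_add_le fun p =>
        (lbdim_largeSect_add_le s p.2 (E p.1)).trans (le_iSup (fun n => lbdim (E n)) p.1)

theorem dpdim_add_dpdim_le_dpdim_prod :
    dpdim (univ : Set X) + dpdim (univ : Set Y) ≤ dpdim (univ : Set (X × Y)) := by
  refine le_iInf₂ fun A hA => EReal.add_le_of_forall_coe_lt fun s hs => ?_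
  let B (n : ℕ) : Set X := largeSect s n (A n)
  have hB : Monotone B ∧ ⋃ n, B n = univ := by
    refine ⟨fun i j hij => largeSect_mono hij (hA.1 hij), eq_univ_of_forall fun x => ?_⟩
    obtain ⟨n, m, hx⟩ :=
      exists_mem_largeSect_of_lt_iSup (hs.trans_le (dpdim_le_iSup_lbdim_sect hA x))
    exact mem_iUnion.2
      ⟨max n m, largeSect_mono (le_max_right n m) (hA.1 (le_max_left n m)) hx⟩
  calc dpdim univ + s ≤ (⨆ n, lbdim (B n)) + s := by gcongr; exact iInf₂_le B hB
    _ ≤ ⨆ n, lbdim (A n) := EReal.iSup_add_le fun n =>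
        (lbdim_largeSect_add_le s n (A n)).trans (le_iSup (fun n => lbdim (A n)) n)

theorem updim_add_dpdim_le_updim_prod :
    updim (univ : Set X) + dpdim (univ : Set Y) ≤ updim (univ : Set (X × Y)) := by
  refine le_iInf₂ fun E hE => EReal.add_le_of_forall_coe_lt fun s hs => ?_
  have hA : Monotone (accumulate E) ∧ ⋃ n, accumulate E n = univ :=
    ⟨monotone_accumulate, by rw [iUnion_accumulate]; exact univ_subset_iff.1 hE⟩
  have hcover : univ ⊆ ⋃ p : ℕ × ℕ, largeSect s p.2 (accumulate E p.1) := fun x _ => by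
    obtain ⟨n, m, hx⟩ :=
      exists_mem_largeSect_of_lt_iSup (hs.trans_le (dpdim_le_iSup_lbdim_sect hA x))
    exact mem_iUnion.2 ⟨(n, m), hx⟩
  calc updim univ + s ≤ (⨆ p : ℕ × ℕ, ubdim (largeSect s p.2 (accumulate E p.1))) + s := by
        gcongr; exact updim_le_of_subset_iUnion_prod hcover
    _ ≤ ⨆ n, ubdim (E n) := EReal.iSup_add_le fun p =>
        (ubdim_largeSect_add_le s p.2 _).trans (ubdim_accumulate_le E p.1)

end PackingDimension

end ZPaper

/-- Corollary `dim:rect`. For any metric spaces `X`, `Y`: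
(i) `updim (X × Y) ≥ updim X + dpdim Y`; (ii) `dpdim (X × Y) ≥ dpdim X + dpdim Y`;
(iii) `lpdim (X × Y) ≥ lpdim X + lpdim Y`. -/
theorem stmt2 {X Y : Type*} [MetricSpace X] [MetricSpace Y] :
    (updim (Set.univ : Set (X × Y)) ≥ updim (Set.univ : Set X) + dpdim (Set.univ : Set Y)) ∧
    (dpdim (Set.univ : Set (X × Y)) ≥ dpdim (Set.univ : Set X) + dpdim (Set.univ : Set Y)) ∧
    (lpdim (Set.univ : Set (X × Y)) ≥ lpdim (Set.univ : Set X) + lpdim (Set.univ : Set Y)) :=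
  ⟨updim_add_dpdim_le_updim_prod, dpdim_add_dpdim_le_dpdim_prod, lpdim_add_lpdim_le_lpdim_prod⟩
end

section
/- Let X, Y be metric spaces, g, h Hausdorff functions and Δ a scale. For any set E ⊆ X × Y, pack^{gh}_{Δ,0}(E) ≥ ∫* lboxm^g_0(E_x) d pack^h_Δ(x). -/
open Filter MeasureTheory Set
open scoped ENNReal NNReal Topology

open Filter MeasureTheory Set ZPaper
open scoped ENNReal NNReal Topology

/-!
The Borel function `lboxMajorant g E` majorises `x ↦ lboxm^g_0(E_x)`; it is assembled from the
closures of the sets where `C_ρ(E_x) g(ρ) ≥ c` holds for all small `ρ`. For a simple function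
below it, each fibre is covered by an increasing union of such closed level sets, so by
continuity from below it suffices to treat finitely many disjoint Borel sets `T_k`, each in the
closure of one level set with a common range of scales. The packing measure with the weight
`a_k` on `T_k` is a metric outer measure, hence additive on them, and bounds `∑ a_k pack^h_Δ(T_k)`.
A (Δ,δ)-packing of `⋃ T_k` is then turned into a (Δ,δ)-packing of `E`: move each centre `x`
slightly into its level set and stack over it a large `r`-separated subset of the section `E_x`;
this multiplies the weight of `(x, r)` by at least `g(r)`.
-/

namespace ZPaper

section CapacityLevel

variable {X : Type*} {Y : Type*} [MetricSpace Y] {g : ℝ → ℝ} {E : Set (X × Y)} {c c' : ℝ≥0∞}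
  {n n' : ℕ}

def capacityLevel (g : ℝ → ℝ) (E : Set (X × Y)) (c : ℝ≥0∞) (n : ℕ) : Set X :=
  {x | ∀ ρ : ℝ, 0 < ρ → ρ ≤ 1 / (n + 1) → c ≤ capacity ρ (sect E x) * ENNReal.ofReal (g ρ)}

lemma capacityLevel_anti (hc : c' ≤ c) : capacityLevel g E c n ⊆ capacityLevel g E c' n :=
  fun _ hx ρ hρ hρn => hc.trans (hx ρ hρ hρn)

lemma capacityLevel_mono (hn : n ≤ n') : capacityLevel g E c n ⊆ capacityLevel g E c n' :=
  fun _ hx ρ hρ hρn => hx ρ hρ (hρn.trans (Nat.one_div_le_one_div hn))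

end CapacityLevel

section Packing

variable {X : Type*} [MetricSpace X] {Y : Type*} [MetricSpace Y]

section WeightedPacking

variable {Δ : Set ℝ} {δ δ' : ℝ} {S S' T : Set X}

lemma IsScaledPacking.mono {π π' : Set (X × ℝ)} (hπ : IsScaledPacking Δ δ π S)
    (hπ' : π' ⊆ π) (hδ : δ ≤ δ') (hS : S ⊆ S') : IsScaledPacking Δ δ' π' S' :=
  ⟨⟨⟨fun p hp => hπ.1.1.1 p (hπ' hp), fun p hp q hq => hπ.1.1.2 p (hπ' hp) q (hπ' hq)⟩,
    fun p hp => hS (hπ.1.2 p (hπ' hp))⟩,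
    fun p hp => ⟨(hπ.2 p (hπ' hp)).1, (hπ.2 p (hπ' hp)).2.trans hδ⟩⟩

lemma packPre_mono (g : ℝ → ℝ) (hδ : δ ≤ δ') (hS : S ⊆ S') :
    packPre g Δ δ S ≤ packPre g Δ δ' S' :=
  iSup₂_le fun π hπ => le_iSup₂_of_le π (hπ.mono subset_rfl hδ hS) le_rfl

lemma sum_le_packPre (g : ℝ → ℝ) (π : Finset (X × ℝ))
    (hπ : IsScaledPacking Δ δ (π : Set (X × ℝ)) S) :
    ∑ p ∈ π, ENNReal.ofReal (g p.2) ≤ packPre g Δ δ S := by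
  refine le_iSup₂_of_le (f := fun π _ => packVal g π) (π : Set (X × ℝ)) hπ (le_of_eq ?_)
  exact (Finset.tsum_subtype π fun p => ENNReal.ofReal (g p.2)).symm

noncomputable def weightedPackPre (W : X → ℝ≥0∞) (h : ℝ → ℝ) (Δ : Set ℝ) (δ : ℝ)
    (S : Set X) : ℝ≥0∞ :=
  ⨆ (π : Finset (X × ℝ)) (_ : IsScaledPacking Δ δ (π : Set (X × ℝ)) S),
    ∑ p ∈ π, W p.1 * ENNReal.ofReal (h p.2)

noncomputable def weightedPackPre0 (W : X → ℝ≥0∞) (h : ℝ → ℝ) (Δ : Set ℝ) (S : Set X) :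
    ℝ≥0∞ :=
  ⨅ (δ : ℝ) (_ : 0 < δ), weightedPackPre W h Δ δ S

variable (W : X → ℝ≥0∞) (h : ℝ → ℝ)

lemma packPre_eq_weightedPackPre_one : packPre h Δ δ S = weightedPackPre 1 h Δ δ S := by
  classical
  simp only [weightedPackPre, Pi.one_apply, one_mul]
  refine le_antisymm (iSup₂_le fun π hπ => ?_) (iSup₂_le fun π hπ => sum_le_packPre h π hπ)
  rw [packVal, ENNReal.tsum_eq_iSup_sum]
  refine iSup_le fun s => ?_
  rw [← Finset.sum_image (f := fun p : X × ℝ => ENNReal.ofReal (h p.2))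
    fun p _ q _ hpq => Subtype.val_injective hpq]
  refine le_iSup₂_of_le (f := fun (π : Finset (X × ℝ)) _ => ∑ p ∈ π, ENNReal.ofReal (h p.2))
    (s.image Subtype.val) (hπ.mono ?_ le_rfl subset_rfl) le_rfl
  simp

lemma weightedPackPre_mono (hδ : δ ≤ δ') (hS : S ⊆ S') :
    weightedPackPre W h Δ δ S ≤ weightedPackPre W h Δ δ' S' :=
  iSup₂_le fun π hπ => le_iSup₂_of_le π (hπ.mono subset_rfl hδ hS) le_rfl

lemma weightedPackPre0_mono (hS : S ⊆ S') :
    weightedPackPre0 W h Δ S ≤ weightedPackPre0 W h Δ S' :=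
  iInf₂_mono fun _ _ => weightedPackPre_mono W h le_rfl hS

lemma weightedPackPre0_empty : weightedPackPre0 W h Δ ∅ = 0 := by
  refine le_antisymm ((iInf₂_le 1 one_pos).trans (iSup₂_le fun π hπ => ?_)) zero_le
  rw [Finset.eq_empty_of_forall_notMem fun p hp => hπ.1.2 p hp]
  simp

lemma add_weightedPackPre_le_of_dist_ge {ρ : ℝ} (hδ : δ < ρ)
    (hST : ∀ x ∈ S, ∀ y ∈ T, ρ ≤ dist x y) :
    weightedPackPre W h Δ δ S + weightedPackPre W h Δ δ T ≤ weightedPackPre W h Δ δ (S ∪ T) := by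
  classical
  have hempty : ∀ U : Set X, IsScaledPacking Δ δ ((∅ : Finset (X × ℝ)) : Set (X × ℝ)) U :=
    fun U => ⟨⟨⟨by simp, by simp⟩, by simp⟩, by simp⟩
  refine ENNReal.biSup_add_biSup_le' ⟨∅, hempty S⟩ ⟨∅, hempty T⟩ fun π₁ h₁ π₂ h₂ => ?_
  have hfar : ∀ p ∈ π₁, ∀ q ∈ π₂, max p.2 q.2 < dist p.1 q.1 := fun p hp q hq =>
    (max_le (h₁.2 p hp).2 (h₂.2 q hq).2).trans_lt
      (hδ.trans_le (hST _ (h₁.1.2 p hp) _ (h₂.1.2 q hq)))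
  have hdisj : Disjoint π₁ π₂ := Finset.disjoint_left.2 fun p hp₁ hp₂ => by
    simpa using (le_max_left _ _).trans_lt (hfar p hp₁ p hp₂) |>.trans_le' (h₁.1.1.1 p hp₁).le
  have hpack : IsScaledPacking Δ δ ((π₁ ∪ π₂ : Finset (X × ℝ)) : Set (X × ℝ)) (S ∪ T) := by
    simp only [Finset.coe_union]
    refine ⟨⟨⟨fun p hp => hp.elim (h₁.1.1.1 p) (h₂.1.1.1 p), fun p hp q hq hpq => ?_⟩,
      fun p hp => hp.elim (fun hp => .inl (h₁.1.2 p hp)) fun hp => .inr (h₂.1.2 p hp)⟩,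
      fun p hp => hp.elim (h₁.2 p) (h₂.2 p)⟩
    rcases hp with hp | hp <;> rcases hq with hq | hq
    · exact h₁.1.1.2 p hp q hq hpq
    · exact (le_max_left _ _).trans_lt (hfar p hp q hq)
    · exact (le_max_right _ _).trans_lt (dist_comm p.1 q.1 ▸ hfar q hq p hp)
    · exact h₂.1.1.2 p hp q hq hpq
  rw [← Finset.sum_union hdisj]
  exact le_iSup₂_of_le _ hpack le_rfl

lemma add_weightedPackPre0_le_of_areSeparated (hST : Metric.AreSeparated S T) :
    weightedPackPre0 W h Δ S + weightedPackPre0 W h Δ T ≤ weightedPackPre0 W h Δ (S ∪ T) := by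
  obtain ⟨ρ, hρ, hST⟩ : ∃ ρ : ℝ, 0 < ρ ∧ ∀ x ∈ S, ∀ y ∈ T, ρ ≤ dist x y := by
    obtain ⟨r, hr, hrST⟩ := hST
    have hr1 : min r 1 ≠ ⊤ := (min_le_right r 1).trans_lt ENNReal.one_lt_top |>.ne
    refine ⟨(min r 1).toReal,
      ENNReal.toReal_pos (lt_min (pos_iff_ne_zero.2 hr) one_pos).ne' hr1, fun x hx y hy => ?_⟩
    rw [← ENNReal.ofReal_le_ofReal_iff dist_nonneg, ← edist_dist, ENNReal.ofReal_toReal hr1]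
    exact (min_le_left _ _).trans (hrST x hx y hy)
  refine le_iInf₂ fun δ hδ => ?_
  have hδ' : 0 < min δ (ρ / 2) := lt_min hδ (half_pos hρ)
  calc weightedPackPre0 W h Δ S + weightedPackPre0 W h Δ T
      ≤ weightedPackPre W h Δ (min δ (ρ / 2)) S + weightedPackPre W h Δ (min δ (ρ / 2)) T :=
        add_le_add (iInf₂_le _ hδ') (iInf₂_le _ hδ')
    _ ≤ weightedPackPre W h Δ (min δ (ρ / 2)) (S ∪ T) :=
        add_weightedPackPre_le_of_dist_ge W h ((min_le_right _ _).trans_lt (half_lt_self hρ)) hST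
    _ ≤ weightedPackPre W h Δ δ (S ∪ T) := weightedPackPre_mono W h (min_le_left _ _) subset_rfl

noncomputable def weightedPackOuter (Δ : Set ℝ) : OuterMeasure X :=
  OuterMeasure.ofFunction (weightedPackPre0 W h Δ) (weightedPackPre0_empty (Δ := Δ) W h)

lemma packMeasure_eq_weightedPackOuter_one (T : Set X) :
    packMeasure h Δ T = weightedPackOuter 1 h Δ T := by
  simp only [packMeasure, methodI, weightedPackOuter, OuterMeasure.ofFunction_apply, packPre0,
    weightedPackPre0, packPre_eq_weightedPackPre_one]

lemma packMeasure_mono (hST : S ⊆ T) : packMeasure h Δ S ≤ packMeasure h Δ T := by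
  simpa only [packMeasure_eq_weightedPackOuter_one] using measure_mono hST

lemma weightedPackOuter_le_weightedPackPre0 (T : Set X) :
    weightedPackOuter W h Δ T ≤ weightedPackPre0 W h Δ T :=
  OuterMeasure.ofFunction_le T

lemma weightedPackOuter_le_sum_inter {C : ℕ → Set X} (hC : T ⊆ ⋃ n, C n) :
    weightedPackOuter W h Δ T ≤ ∑' n, weightedPackPre0 W h Δ (C n ∩ T) := by
  rw [weightedPackOuter, OuterMeasure.ofFunction_apply]
  refine iInf₂_le (fun n => C n ∩ T) fun x hx => ?_
  obtain ⟨n, hn⟩ := mem_iUnion.1 (hC hx)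
  exact mem_iUnion.2 ⟨n, hn, hx⟩

lemma weightedPackOuter_isMetric : (weightedPackOuter W h Δ).IsMetric := by
  intro S T hST
  refine le_antisymm (measure_union_le S T) ?_
  rw [weightedPackOuter, OuterMeasure.ofFunction_apply]
  refine le_iInf₂ fun C hC => ?_
  calc weightedPackOuter W h Δ S + weightedPackOuter W h Δ T
      ≤ ∑' n, weightedPackPre0 W h Δ (C n ∩ S) + ∑' n, weightedPackPre0 W h Δ (C n ∩ T) :=
        add_le_add (weightedPackOuter_le_sum_inter W h (subset_union_left.trans hC))
          (weightedPackOuter_le_sum_inter W h (subset_union_right.trans hC))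
    _ = ∑' n, (weightedPackPre0 W h Δ (C n ∩ S) + weightedPackPre0 W h Δ (C n ∩ T)) :=
        ENNReal.tsum_add.symm
    _ ≤ ∑' n, weightedPackPre0 W h Δ (C n) := ENNReal.tsum_le_tsum fun n =>
        (add_weightedPackPre0_le_of_areSeparated W h
          (hST.mono inter_subset_right inter_subset_right)).trans
          (weightedPackPre0_mono W h (union_subset inter_subset_left inter_subset_left))

lemma mul_weightedPackPre_one_le {c : ℝ≥0∞} (hW : ∀ x ∈ S, c ≤ W x) :
    c * weightedPackPre 1 h Δ δ S ≤ weightedPackPre W h Δ δ S := by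
  simp only [weightedPackPre, ENNReal.mul_iSup, Finset.mul_sum, Pi.one_apply, one_mul]
  exact iSup₂_mono fun π hπ => Finset.sum_le_sum fun p hp => mul_le_mul' (hW _ (hπ.1.2 p hp)) le_rfl

lemma mul_packMeasure_le_weightedPackOuter {c : ℝ≥0∞} (hW : ∀ x ∈ T, c ≤ W x) :
    c * packMeasure h Δ T ≤ weightedPackOuter W h Δ T := by
  have hpre : ∀ S ⊆ T, c * weightedPackPre0 1 h Δ S ≤ weightedPackPre0 W h Δ S :=
    fun S hS => le_iInf₂ fun δ hδ => (mul_le_mul' le_rfl (iInf₂_le δ hδ)).trans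
      (mul_weightedPackPre_one_le W h fun x hx => hW x (hS hx))
  rw [packMeasure_eq_weightedPackOuter_one, weightedPackOuter, weightedPackOuter,
    OuterMeasure.ofFunction_apply]
  refine le_iInf₂ fun C hC => ?_
  calc c * OuterMeasure.ofFunction (weightedPackPre0 1 h Δ) _ T
      ≤ c * ∑' n, weightedPackPre0 1 h Δ (C n ∩ T) :=
        mul_le_mul' le_rfl (weightedPackOuter_le_sum_inter 1 h hC)
    _ = ∑' n, c * weightedPackPre0 1 h Δ (C n ∩ T) := ENNReal.tsum_mul_left.symm
    _ ≤ ∑' n, weightedPackPre0 W h Δ (C n) := ENNReal.tsum_le_tsum fun n =>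
        (hpre _ inter_subset_right).trans (weightedPackPre0_mono W h inter_subset_left)

section Borel

variable [MeasurableSpace X] [BorelSpace X]

noncomputable def weightedPackMeasure (Δ : Set ℝ) : Measure X :=
  (weightedPackOuter W h Δ).toMeasure
    ((BorelSpace.measurable_eq (α := X)).trans_le
      (weightedPackOuter_isMetric W h).borel_le_caratheodory)

lemma weightedPackMeasure_apply (hT : MeasurableSet T) :
    weightedPackMeasure W h Δ T = weightedPackOuter W h Δ T :=
  toMeasure_apply _ _ hT

lemma packMeasure_eq_weightedPackMeasure_one (hT : MeasurableSet T) :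
    packMeasure h Δ T = weightedPackMeasure 1 h Δ T := by
  rw [weightedPackMeasure_apply 1 h hT, packMeasure_eq_weightedPackOuter_one]

end Borel

end WeightedPacking

section ProductPacking

variable {Δ : Set ℝ} {δ : ℝ} {E : Set (X × Y)}

lemma exists_finset_of_lt_capacity_mul {S : Set Y} {ρ : ℝ} {a c : ℝ≥0∞}
    (hc : c < capacity ρ S * a) :
    ∃ F : Finset Y, ↑F ⊆ S ∧ (∀ y ∈ F, ∀ z ∈ F, y ≠ z → ρ < dist y z) ∧
      c < F.card * a := by
  simp only [capacity, ENNReal.iSup_mul, lt_iSup_iff] at hc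
  obtain ⟨F, hF, hc⟩ := hc
  exact ⟨F, hF.1, hF.2, hc⟩

lemma IsPacking.exists_near_mem {π : Finset (X × ℝ)} (hπ : IsPacking (π : Set (X × ℝ)))
    (A : X × ℝ → Set X) (hA : ∀ p ∈ π, p.1 ∈ closure (A p)) :
    ∃ x : X × ℝ → X, (∀ p ∈ π, x p ∈ A p) ∧
      ∀ p ∈ π, ∀ q ∈ π, p ≠ q → p.2 < dist (x p) (x q) := by
  have hsmall : ∀ᶠ ε in 𝓝 (0 : ℝ), ∀ p ∈ π, ∀ q ∈ π, p ≠ q → p.2 + 2 * ε < dist p.1 q.1 := by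
    refine (eventually_all_finset π).2 fun p hp => (eventually_all_finset π).2 fun q hq => ?_
    by_cases hpq : p = q
    · exact .of_forall fun _ hne => absurd hpq hne
    have hlim : Tendsto (fun ε : ℝ => p.2 + 2 * ε) (𝓝 0) (𝓝 p.2) := by
      simpa using ((tendsto_id (x := 𝓝 (0 : ℝ))).const_mul 2).const_add p.2
    exact (hlim.eventually (gt_mem_nhds (hπ.2 p hp q hq hpq))).mono fun _ h _ => h
  obtain ⟨ε, hε, hε0⟩ := ((hsmall.filter_mono nhdsWithin_le_nhds).and
    (self_mem_nhdsWithin (s := Ioi 0))).exists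
  have hnear : ∀ p : X × ℝ, ∃ y, p ∈ π → y ∈ A p ∧ dist p.1 y < ε := fun p => by
    by_cases hp : p ∈ π
    · obtain ⟨y, hyA, hy⟩ := Metric.mem_closure_iff.1 (hA p hp) ε hε0
      exact ⟨y, fun _ => ⟨hyA, hy⟩⟩
    · exact ⟨p.1, fun h => absurd h hp⟩
  choose x hx using hnear
  refine ⟨x, fun p hp => (hx p hp).1, fun p hp q hq hpq => ?_⟩
  have := dist_triangle4 p.1 (x p) (x q) q.1
  have := hε p hp q hq hpq
  have := (hx p hp).2
  have := dist_comm q.1 (x q) ▸ (hx q hq).2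
  linarith

lemma sum_card_mul_le_packPre {ι : Type*} (g : ℝ → ℝ) (K : Finset ι) (x : ι → X) (r : ι → ℝ)
    (F : ι → Finset Y) (hr : ∀ i ∈ K, 0 < r i ∧ r i ∈ Δ ∧ r i ≤ δ)
    (hx : ∀ i ∈ K, ∀ j ∈ K, i ≠ j → r i < dist (x i) (x j))
    (hFE : ∀ i ∈ K, ∀ y ∈ F i, (x i, y) ∈ E)
    (hF : ∀ i ∈ K, ∀ y ∈ F i, ∀ z ∈ F i, y ≠ z → r i < dist y z) :
    ∑ i ∈ K, ((F i).card : ℝ≥0∞) * ENNReal.ofReal (g (r i)) ≤ packPre g Δ δ E := by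
  classical
  set φ : (Σ _ : ι, Y) → (X × Y) × ℝ := fun z => ((x z.1, z.2), r z.1)
  have hsep : ∀ z ∈ K.sigma F, ∀ w ∈ K.sigma F, z ≠ w → (φ z).2 < dist (φ z).1 (φ w).1 := by
    rintro ⟨i, y⟩ hz ⟨j, z⟩ hw hzw
    rw [Finset.mem_sigma] at hz hw
    rw [Prod.dist_eq]
    by_cases hij : i = j
    · subst hij
      exact lt_max_of_lt_right (hF i hz.1 y hz.2 z hw.2 fun hyz => hzw (hyz ▸ rfl))
    · exact lt_max_of_lt_left (hx i hz.1 j hw.1 hij)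
  have hinj : Set.InjOn φ (K.sigma F) := fun z hz w hw hzw => by
    by_contra hne
    have := hsep z hz w hw hne
    rw [hzw, dist_self] at this
    exact (hr w.1 (Finset.mem_sigma.1 hw).1).1.not_gt this
  have hpack : IsScaledPacking Δ δ (((K.sigma F).image φ : Finset _) : Set ((X × Y) × ℝ)) E := by
    simp only [Finset.coe_image]
    refine ⟨⟨⟨?_, ?_⟩, ?_⟩, ?_⟩
    · rintro _ ⟨z, hz, rfl⟩
      exact (hr z.1 (Finset.mem_sigma.1 hz).1).1
    · rintro _ ⟨z, hz, rfl⟩ _ ⟨w, hw, rfl⟩ hzw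
      exact hsep z hz w hw fun h => hzw (h ▸ rfl)
    · rintro _ ⟨z, hz, rfl⟩
      exact hFE z.1 (Finset.mem_sigma.1 hz).1 z.2 (Finset.mem_sigma.1 hz).2
    · rintro _ ⟨z, hz, rfl⟩
      exact (hr z.1 (Finset.mem_sigma.1 hz).1).2
  calc ∑ i ∈ K, ((F i).card : ℝ≥0∞) * ENNReal.ofReal (g (r i))
      = ∑ z ∈ K.sigma F, ENNReal.ofReal (g (φ z).2) := by simp [φ, Finset.sum_sigma]
    _ = ∑ p ∈ (K.sigma F).image φ, ENNReal.ofReal (g p.2) :=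
        (Finset.sum_image (f := fun p => ENNReal.ofReal (g p.2)) hinj).symm
    _ ≤ packPre g Δ δ E := sum_le_packPre g _ hpack

variable {g h : ℝ → ℝ} {W : X → ℝ≥0∞} {n : ℕ} {S : Set X}

lemma sum_mul_le_packPre_of_mem_closure_capacityLevel (π : Finset (X × ℝ))
    (hπ : IsScaledPacking Δ δ (π : Set (X × ℝ)) S) (hπn : ∀ p ∈ π, p.2 ≤ 1 / (n + 1))
    (hW : ∀ x ∈ S, ∃ b, W x < b ∧ x ∈ closure (capacityLevel g E b n)) :
    ∑ p ∈ π, W p.1 * ENNReal.ofReal (h p.2) ≤ packPre (fun r => g r * h r) Δ δ E := by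
  choose! b hWb hb using hW
  have hcenter : ∀ p ∈ π, p.1 ∈ S := fun p hp => hπ.1.2 p hp
  obtain ⟨x, hxA, hx⟩ := hπ.1.1.exists_near_mem (fun p => capacityLevel g E (b p.1) n)
    fun p hp => hb p.1 (hcenter p hp)
  have hF : ∀ p ∈ π, ∃ F : Finset Y, ↑F ⊆ sect E (x p) ∧
      (∀ y ∈ F, ∀ z ∈ F, y ≠ z → p.2 < dist y z) ∧ W p.1 < F.card * ENNReal.ofReal (g p.2) :=
    fun p hp => exists_finset_of_lt_capacity_mul <| (hWb p.1 (hcenter p hp)).trans_le <|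
      hxA p hp p.2 (hπ.1.1.1 p hp) (hπn p hp)
  choose! F hFE hFsep hWF using hF
  calc ∑ p ∈ π, W p.1 * ENNReal.ofReal (h p.2)
      ≤ ∑ p ∈ π, ((F p).card : ℝ≥0∞) * ENNReal.ofReal (g p.2 * h p.2) := by
        refine Finset.sum_le_sum fun p hp => ?_
        -- `W p.1 < #(F p) * g(r)` forces `g(r) > 0`.
        have hg : 0 ≤ g p.2 :=
          (ENNReal.ofReal_pos.1 (pos_of_ne_zero fun h0 => by simpa [h0] using hWF p hp)).le
        rw [ENNReal.ofReal_mul hg, ← mul_assoc]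
        exact mul_le_mul' (hWF p hp).le le_rfl
    _ ≤ packPre (fun r => g r * h r) Δ δ E :=
        sum_card_mul_le_packPre _ π x Prod.snd F
          (fun p hp => ⟨hπ.1.1.1 p hp, hπ.2 p hp⟩) hx hFE hFsep

lemma weightedPackPre0_le_packPre0
    (hW : ∀ x ∈ S, ∃ b, W x < b ∧ x ∈ closure (capacityLevel g E b n)) :
    weightedPackPre0 W h Δ S ≤ packPre0 (fun r => g r * h r) Δ E := by
  refine le_iInf₂ fun δ hδ => ?_
  have hδn : 0 < min δ (1 / (n + 1)) := lt_min hδ Nat.one_div_pos_of_nat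
  refine (iInf₂_le _ hδn).trans <| (iSup₂_le fun π hπ => ?_).trans
    (packPre_mono _ (min_le_left δ (1 / (n + 1))) subset_rfl)
  exact sum_mul_le_packPre_of_mem_closure_capacityLevel π hπ
    (fun p hp => (hπ.2 p hp).2.trans (min_le_right _ _)) hW

end ProductPacking

section Levels

variable {g : ℝ → ℝ} {E : Set (X × Y)} {c c' : ℝ≥0∞} {x : X}

def capacityLevelHull (g : ℝ → ℝ) (E : Set (X × Y)) (c : ℝ≥0∞) : Set X :=
  ⋃ n, closure (capacityLevel g E c n)

lemma capacityLevelHull_anti (hc : c' ≤ c) : capacityLevelHull g E c ⊆ capacityLevelHull g E c' :=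
  iUnion_mono fun _ => closure_mono (capacityLevel_anti hc)

lemma mem_capacityLevelHull_of_lt_lboxPre0 (hc : c < lboxPre0 g (sect E x)) :
    x ∈ capacityLevelHull g E c := by
  obtain ⟨ε, hε, hball⟩ := Metric.eventually_nhds_iff.1 <|
    eventually_nhdsWithin_iff.1 (eventually_lt_of_lt_liminf hc)
  obtain ⟨n, hn⟩ := exists_nat_one_div_lt hε
  refine mem_iUnion.2 ⟨n, subset_closure fun ρ hρ hρn => (hball ?_ hρ).le⟩
  rw [Real.dist_eq, sub_zero, abs_of_pos hρ]
  exact hρn.trans_lt hn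

-- Indexed by `ℚ` so that the supremum is countable, hence Borel measurable.
noncomputable def lboxMajorant (g : ℝ → ℝ) (E : Set (X × Y)) (x : X) : ℝ≥0∞ :=
  ⨆ q : ℚ, (capacityLevelHull g E (ENNReal.ofReal q)).indicator (fun _ => ENNReal.ofReal q) x

lemma lboxPre0_le_lboxMajorant (g : ℝ → ℝ) (E : Set (X × Y)) (x : X) :
    lboxPre0 g (sect E x) ≤ lboxMajorant g E x := by
  refine le_of_forall_lt fun c hc => ?_
  obtain ⟨q, -, hcq, hq⟩ := ENNReal.lt_iff_exists_rat_btwn.1 hc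
  refine hcq.trans_le (le_iSup_of_le q ?_)
  rw [indicator_of_mem (mem_capacityLevelHull_of_lt_lboxPre0 (c := ENNReal.ofReal q) hq)]
  rfl

lemma mem_capacityLevelHull_of_lt_lboxMajorant (hc : c < lboxMajorant g E x) :
    x ∈ capacityLevelHull g E c := by
  obtain ⟨q, hq⟩ := lt_iSup_iff.1 hc
  by_cases hx : x ∈ capacityLevelHull g E (ENNReal.ofReal q)
  · rw [indicator_of_mem hx] at hq
    exact capacityLevelHull_anti hq.le hx
  · rw [indicator_of_notMem hx] at hq
    exact absurd hq ENNReal.not_lt_zero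

section Borel

variable [MeasurableSpace X] [BorelSpace X]

lemma measurableSet_capacityLevelHull : MeasurableSet (capacityLevelHull g E c) :=
  .iUnion fun _ => isClosed_closure.measurableSet

lemma measurable_lboxMajorant (g : ℝ → ℝ) (E : Set (X × Y)) : Measurable (lboxMajorant g E) :=
  .iSup fun _ => measurable_const.indicator measurableSet_capacityLevelHull

end Borel

end Levels

lemma sum_mul_le_of_forall_lt {ι : Type*} {K : Finset ι} {y m : ι → ℝ≥0∞} {P : ℝ≥0∞}
    (hy : ∀ k ∈ K, y k ≠ 0)
    (hP : ∀ a : ι → ℝ≥0∞, (∀ k ∈ K, a k < y k) → ∑ k ∈ K, a k * m k ≤ P) :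
    ∑ k ∈ K, y k * m k ≤ P := by
  have hseq : ∀ k ∈ K, ∃ u : ℕ → ℝ≥0∞, (∀ i, u i < y k) ∧ Tendsto u atTop (𝓝 (y k)) :=
    fun k hk => by
      obtain ⟨u, -, hu, hlim⟩ := exists_seq_strictMono_tendsto' (pos_iff_ne_zero.2 (hy k hk))
      exact ⟨u, fun i => (hu i).2, hlim⟩
  choose! u hu hlim using hseq
  exact le_of_tendsto' (tendsto_finsetSum K fun k hk =>
      ENNReal.Tendsto.mul_const (hlim k hk) (.inl (hy k hk)))
    fun i => hP (fun k => u k i) fun k hk => hu k hk i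

section Borel

variable [MeasurableSpace X] [BorelSpace X] {g h : ℝ → ℝ} {Δ : Set ℝ} {E : Set (X × Y)}

lemma sum_mul_packMeasure_le_of_subset_closure {ι : Type*} (K : Finset ι) (T : ι → Set X)
    (a b : ι → ℝ≥0∞) (n : ℕ) (hT : ∀ k ∈ K, MeasurableSet (T k))
    (hTd : (K : Set ι).PairwiseDisjoint T) (hab : ∀ k ∈ K, a k < b k)
    (hTb : ∀ k ∈ K, T k ⊆ closure (capacityLevel g E (b k) n)) :
    ∑ k ∈ K, a k * packMeasure h Δ (T k) ≤ packPre0 (fun r => g r * h r) Δ E := by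
  classical
  set W : X → ℝ≥0∞ := fun x => ∑ k ∈ K, (T k).indicator (fun _ => a k) x
  have hW : ∀ k ∈ K, ∀ x ∈ T k, W x = a k := fun k hk x hx => by
    simp only [W]
    rw [Finset.sum_eq_single_of_mem k hk fun l hl hlk =>
      indicator_of_notMem (disjoint_left.1 (hTd hk hl hlk.symm) hx) _, indicator_of_mem hx]
  have hU : MeasurableSet (⋃ k ∈ K, T k) := K.measurableSet_biUnion hT
  calc ∑ k ∈ K, a k * packMeasure h Δ (T k)
      ≤ ∑ k ∈ K, weightedPackMeasure W h Δ (T k) := Finset.sum_le_sum fun k hk => by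
        rw [weightedPackMeasure_apply W h (hT k hk)]
        exact mul_packMeasure_le_weightedPackOuter W h fun x hx => (hW k hk x hx).ge
    _ = weightedPackOuter W h Δ (⋃ k ∈ K, T k) := by
        rw [← measure_biUnion_finset hTd hT, weightedPackMeasure_apply W h hU]
    _ ≤ weightedPackPre0 W h Δ (⋃ k ∈ K, T k) := weightedPackOuter_le_weightedPackPre0 W h _
    _ ≤ packPre0 (fun r => g r * h r) Δ E := weightedPackPre0_le_packPre0 fun x hx => by
        obtain ⟨k, hk, hxk⟩ := mem_iUnion₂.1 hx
        exact ⟨b k, (hW k hk x hxk).trans_lt (hab k hk), hTb k hk hxk⟩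

lemma sum_mul_packMeasure_le_of_subset_hull {ι : Type*} (K : Finset ι) (T : ι → Set X)
    (a b : ι → ℝ≥0∞) (hT : ∀ k ∈ K, MeasurableSet (T k))
    (hTd : (K : Set ι).PairwiseDisjoint T) (hab : ∀ k ∈ K, a k < b k)
    (hTb : ∀ k ∈ K, T k ⊆ capacityLevelHull g E (b k)) :
    ∑ k ∈ K, a k * packMeasure h Δ (T k) ≤ packPre0 (fun r => g r * h r) Δ E := by
  set T' : ι → ℕ → Set X := fun k n => T k ∩ closure (capacityLevel g E (b k) n)
  have hT' : ∀ k ∈ K, ∀ n, MeasurableSet (T' k n) :=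
    fun k hk n => (hT k hk).inter isClosed_closure.measurableSet
  have hmono : ∀ k, Monotone (T' k) := fun k n n' hn =>
    inter_subset_inter_right _ (closure_mono (capacityLevel_mono hn))
  have hlim : ∀ k ∈ K, packMeasure h Δ (T k) = ⨆ n, packMeasure h Δ (T' k n) := fun k hk => by
    simp only [packMeasure_eq_weightedPackMeasure_one h (hT k hk),
      packMeasure_eq_weightedPackMeasure_one h (hT' k hk _)]
    rw [← (hmono k).measure_iUnion, ← inter_iUnion]
    exact congrArg _ (inter_eq_left.2 (hTb k hk)).symm
  calc ∑ k ∈ K, a k * packMeasure h Δ (T k)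
      = ⨆ n, ∑ k ∈ K, a k * packMeasure h Δ (T' k n) := by
        simp only [Finset.sum_congr rfl fun k hk => congrArg (a k * ·) (hlim k hk),
          ENNReal.mul_iSup]
        exact ENNReal.finsetSum_iSup_of_monotone fun k n n' hn =>
          mul_le_mul' le_rfl (packMeasure_mono h (hmono k hn))
    _ ≤ packPre0 (fun r => g r * h r) Δ E := iSup_le fun n =>
        sum_mul_packMeasure_le_of_subset_closure K (T' · n) a b n (fun k hk => hT' k hk n)
          (hTd.mono fun _ => inter_subset_left) hab fun _ _ => inter_subset_right

lemma sum_mul_packMeasure_fiber_le (s : SimpleFunc X ℝ≥0∞)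
    (hs : ∀ x, s x ≤ lboxMajorant g E x) :
    ∑ y ∈ s.range, y * packMeasure h Δ (s ⁻¹' {y}) ≤ packPre0 (fun r => g r * h r) Δ E := by
  classical
  rw [← Finset.sum_filter_of_ne (p := (· ≠ 0)) fun y _ hy => left_ne_zero_of_mul hy]
  refine sum_mul_le_of_forall_lt (fun y hy => (Finset.mem_filter.1 hy).2) fun a ha => ?_
  choose! b hab hby using fun y hy => exists_between (ha y hy)
  refine sum_mul_packMeasure_le_of_subset_hull _ _ a b (fun y _ => s.measurableSet_fiber y)
    (fun y _ z _ hyz => disjoint_left.2 fun x hxy hxz => hyz (hxy.symm.trans hxz)) hab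
    fun y hy x hx => mem_capacityLevelHull_of_lt_lboxMajorant ((hby y hy).trans_le ?_)
  rw [← mem_singleton_iff.1 hx]
  exact hs x

end Borel

end Packing

end ZPaper

theorem stmt6_general {X Y : Type*} [MetricSpace X] [MetricSpace Y] (g h : ℝ → ℝ)
    (Δ : Set ℝ) (E : Set (X × Y)) :
    packPre0 (fun r => g r * h r) Δ E ≥
      upperIntegral (packMeasure h Δ) (fun x => lboxPre0 g (sect E x)) := by
  let _ : MeasurableSpace X := borel X
  have : BorelSpace X := ⟨rfl⟩
  exact (iInf₂_le_of_le _ (lboxPre0_le_lboxMajorant g E)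
    (iInf_le _ (measurable_lboxMajorant g E))).trans
      (iSup₂_le fun s hs => sum_mul_packMeasure_fiber_le s hs)

/-- Lemma `lem:delta0`. For metric spaces `X`, `Y`, Hausdorff
functions `g`, `h`, a scale `Δ` and any `E ⊆ X × Y`,
`pack^{gh}_{Δ,0}(E) ≥ ∫* lboxm^g_0(E_x) d pack^h_Δ(x)`. -/
theorem stmt6 {X Y : Type*} [MetricSpace X] [MetricSpace Y] (g h : ℝ → ℝ)
    (hg : IsHausdorffFunction g) (hh : IsHausdorffFunction h)
    (Δ : Set ℝ) (hΔ : IsScale Δ) (E : Set (X × Y)) :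
    packPre0 (fun r => g r * h r) Δ E ≥
      upperIntegral (packMeasure h Δ) (fun x => lboxPre0 g (sect E x)) :=
  stmt6_general g h Δ E
end

section
/- Let X be a metric space, g a Hausdorff function and E ⊆ X. Then lpack^g_0(E) = 0 if and only if lboxm^g_0(E) = 0. -/
open Filter MeasureTheory Set
open scoped ENNReal NNReal Topology

open Filter MeasureTheory Set ZPaper
open scoped ENNReal NNReal Topology

/-!
A `δ`-separated subset of `E` with `δ` in a scale `Δ` is a uniform `(Δ, δ)`-packing, and `0` is a
limit of `Δ`, so `lboxm^g_0(E) ≤ pack^g_{Δ,0}(E)` for every scale. Conversely, if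
`lboxm^g_0(E) = 0`, choose radii `r_n → 0` with `C_{r_n}(E) g(r_n) < ε_n`, where `Σ ε_n ≤ ε`. In the
scale `{r_n}` every packing of `E` splits by radius into `r_n`-separated subsets of `E`, so its
value is at most `Σ ε_n`.
-/

namespace ZPaper

lemma packVal_image_prodMk {Z : Type*} [DecidableEq Z] (g : ℝ → ℝ) (F : Finset Z) (r : ℝ) :
    packVal g (↑(F.image fun x => (x, r)) : Set (Z × ℝ)) = F.card * ENNReal.ofReal (g r) := by
  rw [packVal, Finset.tsum_subtype' _ fun p : Z × ℝ => ENNReal.ofReal (g p.2),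
    Finset.sum_image fun x _ y _ hxy => (Prod.mk.inj hxy).1]
  simp

variable {X : Type*} [MetricSpace X]

lemma card_le_capacity {E : Set X} {r : ℝ} {F : Finset X}
    (h : ↑F ⊆ E ∧ ∀ x ∈ F, ∀ y ∈ F, x ≠ y → r < dist x y) :
    (F.card : ℝ≥0∞) ≤ capacity r E :=
  le_iSup₂_of_le F h le_rfl

lemma IsScale.frequently_mem {Δ : Set ℝ} (hΔ : IsScale Δ) : ∃ᶠ r in 𝓝[>] (0 : ℝ), r ∈ Δ :=
  frequently_nhdsWithin_iff.2 <|
    (mem_closure_iff_frequently.1 hΔ.2).mono fun _ hr => ⟨hr, hΔ.1 hr⟩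

lemma isScale_range_of_tendsto {u : ℕ → ℝ} (hpos : ∀ n, 0 < u n)
    (hu : Tendsto u atTop (𝓝 0)) : IsScale (range u) :=
  ⟨range_subset_iff.2 hpos, mem_closure_of_tendsto hu (Eventually.of_forall mem_range_self)⟩

lemma capacity_mul_le_packPre (g : ℝ → ℝ) (E : Set X) {Δ : Set ℝ} {δ r : ℝ}
    (hrΔ : r ∈ Δ) (hr : 0 < r) (hrδ : r ≤ δ) :
    capacity r E * ENNReal.ofReal (g r) ≤ packPre g Δ δ E := by
  classical
  rw [capacity, ENNReal.iSup_mul]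
  refine iSup_le fun F => ?_
  rw [ENNReal.iSup_mul]
  refine iSup_le fun hF => ?_
  have hpack : IsScaledPacking Δ δ (↑(F.image fun x => (x, r)) : Set (X × ℝ)) E := by
    simp only [IsScaledPacking, IsPackingOf, IsPacking, Finset.coe_image, forall_mem_image,
      Finset.mem_coe]
    refine ⟨⟨⟨fun _ _ => hr, fun x hx y hy hne => hF.2 x hx y hy fun h => hne (h ▸ rfl)⟩,
      fun x hx => hF.1 hx⟩, fun _ _ => ⟨hrΔ, hrδ⟩⟩
  rw [← packVal_image_prodMk]
  exact le_iSup₂_of_le _ hpack le_rfl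

theorem lboxPre0_le_lpackPre0 (g : ℝ → ℝ) (E : Set X) : lboxPre0 g E ≤ lpackPre0 g E := by
  refine le_iInf₂ fun Δ hΔ => le_iInf₂ fun δ hδ => liminf_le_of_frequently_le' ?_
  have hsmall : ∀ᶠ r in 𝓝[>] (0 : ℝ), r ∈ Ioc 0 δ := Ioc_mem_nhdsGT hδ
  exact (hΔ.frequently_mem.and_eventually hsmall).mono fun r ⟨hrΔ, hr, hrδ⟩ =>
    capacity_mul_le_packPre g E hrΔ hr hrδ

/-- The members of a packing of `E` sharing the radius `ρ` have centres `ρ`-apart. -/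
lemma packVal_inter_radius_le (g : ℝ → ℝ) {E : Set X} {π : Set (X × ℝ)} (hπ : IsPackingOf π E)
    (ρ : ℝ) : packVal g (π ∩ {p | p.2 = ρ}) ≤ capacity ρ E * ENNReal.ofReal (g ρ) := by
  classical
  set A : Set (X × ℝ) := π ∩ {p | p.2 = ρ}
  have hval : ∀ p : A, ENNReal.ofReal (g (p : X × ℝ).2) = ENNReal.ofReal (g ρ) :=
    fun ⟨_, hp⟩ => by rw [hp.2]
  rw [packVal, tsum_congr hval, ENNReal.tsum_eq_iSup_sum]
  refine iSup_le fun F => ?_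
  rw [Finset.sum_const, nsmul_eq_mul]
  gcongr
  have hinj : InjOn (fun p : A => (p : X × ℝ).1) ↑F := fun p _ q _ h =>
    Subtype.ext (Prod.ext h (p.2.2.trans q.2.2.symm))
  rw [← Finset.card_image_of_injOn hinj]
  refine card_le_capacity ⟨?_, ?_⟩
  · simp only [Finset.coe_image, image_subset_iff]
    exact fun p _ => hπ.2 _ p.2.1
  · simp only [Finset.mem_image]
    rintro _ ⟨p, -, rfl⟩ _ ⟨q, -, rfl⟩ hne
    have hsep := hπ.1.2 _ p.2.1 _ q.2.1 fun h => hne (congrArg Prod.fst h)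
    rwa [show (p : X × ℝ).2 = ρ from p.2.2] at hsep

lemma packVal_le_tsum_capacity (g : ℝ → ℝ) {E : Set X} {π : Set (X × ℝ)} {u : ℕ → ℝ}
    (hπ : IsPackingOf π E) (hu : ∀ p ∈ π, p.2 ∈ range u) :
    packVal g π ≤ ∑' n, capacity (u n) E * ENNReal.ofReal (g (u n)) := by
  have hcover : π ⊆ ⋃ n, π ∩ {p | p.2 = u n} := fun p hp => by
    obtain ⟨n, hn⟩ := hu p hp
    exact mem_iUnion.2 ⟨n, hp, hn.symm⟩
  calc packVal g π ≤ packVal g (⋃ n, π ∩ {p | p.2 = u n}) :=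
        ENNReal.tsum_mono_subtype (fun p : X × ℝ => ENNReal.ofReal (g p.2)) hcover
    _ ≤ ∑' n, packVal g (π ∩ {p | p.2 = u n}) :=
        ENNReal.tsum_iUnion_le_tsum (fun p : X × ℝ => ENNReal.ofReal (g p.2)) _
    _ ≤ _ := ENNReal.tsum_le_tsum fun n => packVal_inter_radius_le g hπ (u n)

lemma lpackPre0_le_tsum_capacity (g : ℝ → ℝ) (E : Set X) {u : ℕ → ℝ} (hu : IsScale (range u)) :
    lpackPre0 g E ≤ ∑' n, capacity (u n) E * ENNReal.ofReal (g (u n)) :=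
  calc lpackPre0 g E ≤ packPre0 g (range u) E := iInf₂_le _ hu
    _ ≤ packPre g (range u) 1 E := iInf₂_le 1 one_pos
    _ ≤ _ := iSup₂_le fun _ hπ => packVal_le_tsum_capacity g hπ.1 fun p hp => (hπ.2 p hp).1

theorem lpackPre0_eq_zero_of_lboxPre0_eq_zero {g : ℝ → ℝ} {E : Set X} (h : lboxPre0 g E = 0) :
    lpackPre0 g E = 0 := by
  refine le_antisymm (ENNReal.le_of_forall_pos_le_add fun ε hε _ => ?_) zero_le
  rw [zero_add]
  obtain ⟨ε', hε'pos, hε'sum⟩ :=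
    ENNReal.exists_pos_sum_of_countable (ENNReal.coe_ne_zero.2 hε.ne') ℕ
  have hradius : ∀ n : ℕ, ∃ r ∈ Ioo (0 : ℝ) (1 / (n + 1)),
      capacity r E * ENNReal.ofReal (g r) < ε' n := by
    intro n
    have hlt : lboxPre0 g E < ε' n := h ▸ ENNReal.coe_pos.2 (hε'pos n)
    exact ((frequently_lt_of_liminf_lt (h := hlt)).and_eventually
      (Ioo_mem_nhdsGT (by positivity))).exists.imp fun r ⟨hr, hrI⟩ => ⟨hrI, hr⟩
  choose u hu hcap using hradius
  have hscale : IsScale (range u) := isScale_range_of_tendsto (fun n => (hu n).1) <|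
    squeeze_zero (fun n => (hu n).1.le) (fun n => (hu n).2.le)
      tendsto_one_div_add_atTop_nhds_zero_nat
  calc lpackPre0 g E ≤ ∑' n, capacity (u n) E * ENNReal.ofReal (g (u n)) :=
        lpackPre0_le_tsum_capacity g E hscale
    _ ≤ ∑' n, (ε' n : ℝ≥0∞) := ENNReal.tsum_le_tsum fun n => (hcap n).le
    _ ≤ ε := hε'sum.le

end ZPaper

theorem stmt14_general {X : Type*} [MetricSpace X] (g : ℝ → ℝ)
    (E : Set X) : lpackPre0 g E = 0 ↔ lboxPre0 g E = 0 :=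
  ⟨fun h => le_zero_iff.1 (h ▸ lboxPre0_le_lpackPre0 g E),
    lpackPre0_eq_zero_of_lboxPre0_eq_zero⟩

/-- Proposition `lem:00`. For a Hausdorff function `g` and any
`E ⊆ X`, `lpack^g_0(E) = 0` iff `lboxm^g_0(E) = 0`. -/
theorem stmt14 {X : Type*} [MetricSpace X] (g : ℝ → ℝ) (hg : IsHausdorffFunction g)
    (E : Set X) : lpackPre0 g E = 0 ↔ lboxPre0 g E = 0 :=
  stmt14_general g E
end
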